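/- Under the standing setup (Assumption 1), with probability one the following holds: for every N ∈ ℕ, the SAA problem (P_SAA) with samples ξ¹, …, ξ^N has at least one solution. -/

import Mathlib

open MeasureTheory Filter Topology TopologicalSpace
open scoped ENNReal

noncomputable section

/-- Weak-star convergence of a sequence in the dual `U = X*` of a Banach space `X`. -/
def WSTendsto {X : Type*} [NormedAddCommGroup X] [NormedSpace ℝ X]
    (u : ℕ → StrongDual ℝ X) (u₀ : StrongDual ℝ X) : Prop :=
  ∀ x : X, Tendsto (fun n => u n x) atTop (𝓝 (u₀ x))

open Classical in
/-- The `[0,∞]`-valued indicator function `I_C` of a set: `0` on `C` and `∞` off `C`. -/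
def iInd {α : Type*} (C : Set α) (a : α) : ℝ≥0∞ := if a ∈ C then 0 else ⊤

/-- Assumption 1 (standing setup): `U := StrongDual ℝ X` is the dual of the real
separable Banach space `X`; `B` is linear and weakly*-to-strongly continuous; `𝒥` is a
nonnegative random lower semicontinuous integrand; `𝒢 : W × Ξ → R₀` is Carathéodory with
values in `R` along `B`, Carathéodory into `R` on `B(dom ψ) × Ξ`; `K ⊂ R` is a nonempty
closed convex cone; `ψ` is proper, convex, weakly* lsc with bounded weakly* closed domain;
and problem (P) has a feasible point with finite objective value. -/
structure StandingSetup (X W R R₀ Ξ Ω : Type*)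
    [NormedAddCommGroup X] [NormedSpace ℝ X]
    [NormedAddCommGroup W] [NormedSpace ℝ W]
    [NormedAddCommGroup R] [NormedSpace ℝ R]
    [NormedAddCommGroup R₀] [NormedSpace ℝ R₀]
    [MeasurableSpace R] [BorelSpace R] [MeasurableSpace R₀] [BorelSpace R₀]
    [MetricSpace Ξ] [MeasurableSpace Ξ] [BorelSpace Ξ]
    [MeasurableSpace Ω] : Type _ where
  /-- the sample probability measure -/
  P : Measure Ω
  hP : IsProbabilityMeasure P
  /-- the law `ℙ` of the random element `ξ` -/
  μ : Measure Ξ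
  hμ : IsProbabilityMeasure μ
  /-- the i.i.d. samples `ξ¹, ξ², …` -/
  samp : ℕ → Ω → Ξ
  samp_meas : ∀ i, Measurable (samp i)
  samp_law : ∀ i, Measure.map (samp i) P = μ
  samp_indep : ProbabilityTheory.iIndepFun samp P
  /-- the linear, weakly*-to-strongly continuous operator `B : U → W` -/
  B : StrongDual ℝ X →ₗ[ℝ] W
  B_wsc : ∀ (u : ℕ → StrongDual ℝ X) (u₀ : StrongDual ℝ X),
    WSTendsto u u₀ → Tendsto (fun n => B (u n)) atTop (𝓝 (B u₀))
  /-- the integrand `𝒥 : W × Ξ → [0,∞)` -/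
  J : W → Ξ → ℝ
  J_nonneg : ∀ w ξ, 0 ≤ J w ξ
  /-- random lower semicontinuity of `𝒥`: lower semicontinuity in `w` … -/
  J_lsc : ∀ ξ, LowerSemicontinuous fun w => J w ξ
  /-- … and Effros measurability of the epigraphical multifunction -/
  J_effros : ∀ O : Set (W × ℝ), IsOpen O → MeasurableSet {ξ | ∃ p ∈ O, J p.1 ξ ≤ p.2}
  /-- the control regularizer `ψ : U → [0,∞]` -/
  ψ : StrongDual ℝ X → ℝ≥0∞
  ψ_proper : ∃ u, ψ u ≠ ⊤
  ψ_convex : ∀ u v : StrongDual ℝ X, ∀ t : ℝ, 0 ≤ t → t ≤ 1 →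
    ψ (t • u + (1 - t) • v) ≤ ENNReal.ofReal t * ψ u + ENNReal.ofReal (1 - t) * ψ v
  ψ_wlsc : ∀ (u : ℕ → StrongDual ℝ X) (u₀ : StrongDual ℝ X),
    WSTendsto u u₀ → ψ u₀ ≤ atTop.liminf fun n => ψ (u n)
  ψ_dom_bdd : ∃ C : ℝ, ∀ u, ψ u ≠ ⊤ → ‖u‖ ≤ C
  ψ_dom_closed : ∀ (u : ℕ → StrongDual ℝ X) (u₀ : StrongDual ℝ X),
    (∀ n, ψ (u n) ≠ ⊤) → WSTendsto u u₀ → ψ u₀ ≠ ⊤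
  /-- the nonempty closed convex cone `K ⊂ R` -/
  K : Set R
  K_ne : K.Nonempty
  K_closed : IsClosed K
  K_convex : Convex ℝ K
  K_cone : ∀ (c : ℝ) (r : R), 0 ≤ c → r ∈ K → c • r ∈ K
  /-- the embedding witnessing `R ⊂ R₀` -/
  emb : R →ₗᵢ[ℝ] R₀
  /-- the constraint map `𝒢 : W × Ξ → R₀`, Carathéodory -/
  G₀ : W → Ξ → R₀
  G₀_cont : ∀ ξ, Continuous fun w => G₀ w ξ
  G₀_meas : ∀ w, Measurable (G₀ w)
  /-- the `R`-valued realization of `𝒢`, i.e. `𝒢(Bu,ξ) ∈ R` for all `(u,ξ)` -/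
  G : W → Ξ → R
  G_compat : ∀ (u : StrongDual ℝ X) (ξ : Ξ), G₀ (B u) ξ = emb (G (B u) ξ)
  /-- `𝒢 : B(dom ψ) × Ξ → R` is Carathéodory -/
  G_contOn : ∀ ξ, ContinuousOn (fun w => G w ξ) (B '' {u | ψ u ≠ ⊤})
  G_meas : ∀ w, Measurable (G w)
  /-- problem (P) has a feasible point with finite objective value -/
  feas_pt : ∃ u : StrongDual ℝ X, (∀ᵐ ξ ∂μ, G (B u) ξ ∈ K) ∧
    (∫⁻ ξ, ENNReal.ofReal (J (B u) ξ) ∂μ) + ψ u ≠ ⊤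

namespace StandingSetup

variable {X W R R₀ Ξ Ω : Type*}
    [NormedAddCommGroup X] [NormedSpace ℝ X]
    [NormedAddCommGroup W] [NormedSpace ℝ W]
    [NormedAddCommGroup R] [NormedSpace ℝ R]
    [NormedAddCommGroup R₀] [NormedSpace ℝ R₀]
    [MeasurableSpace R] [BorelSpace R] [MeasurableSpace R₀] [BorelSpace R₀]
    [MetricSpace Ξ] [MeasurableSpace Ξ] [BorelSpace Ξ]
    [MeasurableSpace Ω]
    (S : StandingSetup X W R R₀ Ξ Ω)

/-- the expected objective `F(u) = E[𝒥(Bu,ξ)]` -/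
def F (u : StrongDual ℝ X) : ℝ≥0∞ := ∫⁻ ξ, ENNReal.ofReal (S.J (S.B u) ξ) ∂S.μ

/-- the full objective `F + ψ` of problem (P) -/
def obj (u : StrongDual ℝ X) : ℝ≥0∞ := S.F u + S.ψ u

/-- feasibility for problem (P): `G(u,ξ) ∈ K` for `ℙ`-a.e. `ξ ∈ Ξ` -/
def Feas (u : StrongDual ℝ X) : Prop := ∀ᵐ ξ ∂S.μ, S.G (S.B u) ξ ∈ S.K

/-- solutions of problem (P) -/
def SolP (u : StrongDual ℝ X) : Prop := S.Feas u ∧ ∀ v, S.Feas v → S.obj u ≤ S.obj v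

/-- the optimal value `ϑ*` of problem (P) -/
def valP : ℝ≥0∞ := ⨅ (u : StrongDual ℝ X) (_ : S.Feas u), S.obj u

/-- the SAA objective `F̂_N(·,ω)` -/
def FN (N : ℕ) (ω : Ω) (u : StrongDual ℝ X) : ℝ≥0∞ :=
  (N : ℝ≥0∞)⁻¹ * ∑ i ∈ Finset.range N, ENNReal.ofReal (S.J (S.B u) (S.samp i ω))

/-- the full objective of the SAA problem (P_SAA) -/
def objN (N : ℕ) (ω : Ω) (u : StrongDual ℝ X) : ℝ≥0∞ := S.FN N ω u + S.ψ u

/-- feasibility for the SAA problem: `G(u,ξⁱ) ∈ K`, `i = 1, …, N` -/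
def FeasN (N : ℕ) (ω : Ω) (u : StrongDual ℝ X) : Prop :=
  ∀ i ∈ Finset.range N, S.G (S.B u) (S.samp i ω) ∈ S.K

/-- solutions of the SAA problem (P_SAA) -/
def SolN (N : ℕ) (ω : Ω) (u : StrongDual ℝ X) : Prop :=
  S.FeasN N ω u ∧ ∀ v, S.FeasN N ω v → S.objN N ω u ≤ S.objN N ω v

/-- the SAA optimal value `ϑ̂_N*` -/
def valN (N : ℕ) (ω : Ω) : ℝ≥0∞ :=
  ⨅ (u : StrongDual ℝ X) (_ : S.FeasN N ω u), S.objN N ω u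

/-- the feasible-set multifunction `𝒰(ξ) = {u ∈ U ∣ G(u,ξ) ∈ K}` -/
def Uset (ξ : Ξ) : Set (StrongDual ℝ X) := {u | S.G (S.B u) ξ ∈ S.K}

end StandingSetup

/-! The direct method of the calculus of variations, applied pathwise. Fix a feasible point `u₀`
of (P) with finite objective; almost surely every sample lies in the full-measure set where
`G(u₀, ·) ∈ K`, so `u₀` is feasible for every SAA problem. Minimizing sequences of (P_SAA) stay
in the bounded domain of `ψ`, hence (`X` separable, sequential Banach–Alaoglu) have weak*
convergent subsequences. `B` turns weak* into norm convergence, under which the finitely many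
constraints persist (`K` closed, `𝒢(·, ξ)` continuous on `B(dom ψ)`) and `F̂_N + ψ` is lower
semicontinuous, so the limit is a solution. -/

namespace ENNReal

variable {ι : Type*} {f : Filter ι}

theorem le_liminf_add (u v : ι → ℝ≥0∞) :
    liminf u f + liminf v f ≤ liminf (u + v) f := by
  rcases eq_or_ne (liminf u f) 0 with hu | hu
  · rw [hu, zero_add]
    exact liminf_le_liminf (Eventually.of_forall fun n => le_add_self)
  rcases eq_or_ne (liminf v f) 0 with hv | hv
  · rw [hv, add_zero]
    exact liminf_le_liminf (Eventually.of_forall fun n => le_self_add)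
  refine le_of_forall_lt fun c hc => ?_
  obtain ⟨a, ha, b, hb, hc⟩ := ENNReal.exists_lt_add_of_lt_add hc hu hv
  refine hc.trans_le (le_liminf_of_le (by isBoundedDefault) ?_)
  filter_upwards [eventually_lt_of_lt_liminf ha, eventually_lt_of_lt_liminf hb] with n hun hvn
  exact add_le_add hun.le hvn.le

theorem le_liminf_finset_sum {κ : Type*} (s : Finset κ) (u : κ → ι → ℝ≥0∞) :
    ∑ k ∈ s, liminf (u k) f ≤ liminf (fun n => ∑ k ∈ s, u k n) f := by
  classical
  induction s using Finset.induction with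
  | empty => simp
  | insert k s hk ih =>
    simp only [Finset.sum_insert hk]
    exact (add_le_add_right ih _).trans (le_liminf_add _ _)

theorem le_liminf_const_mul [f.NeBot] (c : ℝ≥0∞) (u : ι → ℝ≥0∞) :
    c * liminf u f ≤ liminf (fun n => c * u n) f := by
  simpa [liminf_const, Pi.mul_def] using ENNReal.le_liminf_mul (u := fun _ => c) (v := u) (f := f)

end ENNReal

theorem exists_isMinOn_of_subseq_le_liminf {α β : Type*} [CompleteLinearOrder β]
    [TopologicalSpace β] [OrderTopology β] [FirstCountableTopology β] {f : α → β} {A : Set α}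
    (hA : A.Nonempty)
    (hf : ∀ u : ℕ → α, (∀ n, u n ∈ A) →
      ∃ a ∈ A, ∃ φ : ℕ → ℕ, StrictMono φ ∧ f a ≤ liminf (f ∘ u ∘ φ) atTop) :
    ∃ a ∈ A, IsMinOn f A a := by
  obtain ⟨m, -, hm, hmA⟩ := exists_seq_tendsto_sInf (hA.image f) (OrderBot.bddBelow _)
  choose u huA hfu using hmA
  obtain ⟨a, haA, φ, hφ, ha⟩ := hf u huA
  have hfu : f ∘ u ∘ φ = m ∘ φ := funext fun n => hfu (φ n)
  refine ⟨a, haA, fun b hb => ?_⟩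
  calc f a ≤ liminf (m ∘ φ) atTop := hfu ▸ ha
    _ = sInf (f '' A) := (hm.comp hφ.tendsto_atTop).liminf_eq
    _ ≤ f b := sInf_le (Set.mem_image_of_mem f hb)

theorem exists_wsTendsto_subseq_of_norm_le {X : Type*} [NormedAddCommGroup X]
    [NormedSpace ℝ X] [SeparableSpace X] {u : ℕ → StrongDual ℝ X} {C : ℝ}
    (hC : ∀ n, ‖u n‖ ≤ C) :
    ∃ u₀ : StrongDual ℝ X, ∃ φ : ℕ → ℕ, StrictMono φ ∧ WSTendsto (u ∘ φ) u₀ := by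
  have hball : ∀ n, StrongDual.toWeakDual (u n) ∈
      WeakDual.toStrongDual ⁻¹' Metric.closedBall (0 : StrongDual ℝ X) C := fun n => by
    simpa using hC n
  obtain ⟨a, -, φ, hφ, ha⟩ := WeakDual.isSeqCompact_closedBall ℝ X 0 C hball
  exact ⟨WeakDual.toStrongDual a, φ, hφ, fun x => ((WeakDual.eval_continuous x).tendsto a).comp ha⟩

namespace StandingSetup

variable {X W R R₀ Ξ Ω : Type*}
    [NormedAddCommGroup X] [NormedSpace ℝ X]
    [NormedAddCommGroup W] [NormedSpace ℝ W]
    [NormedAddCommGroup R] [NormedSpace ℝ R]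
    [NormedAddCommGroup R₀] [NormedSpace ℝ R₀]
    [MeasurableSpace R] [BorelSpace R] [MeasurableSpace R₀] [BorelSpace R₀]
    [MetricSpace Ξ] [MeasurableSpace Ξ] [BorelSpace Ξ]
    [MeasurableSpace Ω]
    (S : StandingSetup X W R R₀ Ξ Ω) {N : ℕ} {ω : Ω}

theorem FN_le_liminf_of_tendsto {u : ℕ → StrongDual ℝ X} {u₀ : StrongDual ℝ X}
    (hu : Tendsto (fun n => S.B (u n)) atTop (𝓝 (S.B u₀))) :
    S.FN N ω u₀ ≤ liminf (fun n => S.FN N ω (u n)) atTop := by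
  have hJ : ∀ i, ENNReal.ofReal (S.J (S.B u₀) (S.samp i ω)) ≤
      liminf (fun n => ENNReal.ofReal (S.J (S.B (u n)) (S.samp i ω))) atTop := fun i =>
    ((ENNReal.continuous_ofReal.comp_lowerSemicontinuous (S.J_lsc (S.samp i ω))
      ENNReal.ofReal_mono).le_liminf _).trans hu.liminf_le_liminf_comp
  calc S.FN N ω u₀
      ≤ (N : ℝ≥0∞)⁻¹ * ∑ i ∈ Finset.range N,
          liminf (fun n => ENNReal.ofReal (S.J (S.B (u n)) (S.samp i ω))) atTop :=
        mul_le_mul_right (Finset.sum_le_sum fun i _ => hJ i) _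
    _ ≤ liminf (fun n => S.FN N ω (u n)) atTop :=
        (mul_le_mul_right (ENNReal.le_liminf_finset_sum _ _) _).trans
          (ENNReal.le_liminf_const_mul _ _)

theorem objN_le_liminf_of_wsTendsto {u : ℕ → StrongDual ℝ X} {u₀ : StrongDual ℝ X}
    (hu : WSTendsto u u₀) :
    S.objN N ω u₀ ≤ liminf (fun n => S.objN N ω (u n)) atTop :=
  (add_le_add (S.FN_le_liminf_of_tendsto (S.B_wsc u u₀ hu)) (S.ψ_wlsc u u₀ hu)).trans
    (ENNReal.le_liminf_add _ _)

theorem feasN_of_wsTendsto {u : ℕ → StrongDual ℝ X} {u₀ : StrongDual ℝ X}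
    (hfeas : ∀ n, S.FeasN N ω (u n)) (hψ : ∀ n, S.ψ (u n) ≠ ⊤) (hu : WSTendsto u u₀) :
    S.FeasN N ω u₀ := by
  intro i hi
  have hBu : Tendsto (fun n => S.B (u n)) atTop (𝓝[S.B '' {v | S.ψ v ≠ ⊤}] (S.B u₀)) :=
    tendsto_nhdsWithin_iff.2
      ⟨S.B_wsc u u₀ hu, Eventually.of_forall fun n => Set.mem_image_of_mem _ (hψ n)⟩
  have hG := (S.G_contOn (S.samp i ω) _
    (Set.mem_image_of_mem _ (S.ψ_dom_closed u u₀ hψ hu))).tendsto.comp hBu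
  exact S.K_closed.mem_of_tendsto hG (Eventually.of_forall fun n => hfeas n i hi)

theorem exists_solN_of_feasN [SeparableSpace X] {u₀ : StrongDual ℝ X}
    (hfeas : S.FeasN N ω u₀) (hψ : S.ψ u₀ ≠ ⊤) : ∃ u, S.SolN N ω u := by
  obtain ⟨C, hC⟩ := S.ψ_dom_bdd
  let A := {v | S.FeasN N ω v ∧ S.ψ v ≠ ⊤}
  have hA : ∀ v : ℕ → StrongDual ℝ X, (∀ n, v n ∈ A) → ∃ a ∈ A, ∃ φ : ℕ → ℕ,
      StrictMono φ ∧ S.objN N ω a ≤ liminf (S.objN N ω ∘ v ∘ φ) atTop := by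
    intro v hv
    obtain ⟨a, φ, hφ, ha⟩ := exists_wsTendsto_subseq_of_norm_le fun n => hC _ (hv n).2
    have hψφ : ∀ n, S.ψ (v (φ n)) ≠ ⊤ := fun n => (hv (φ n)).2
    exact ⟨a, ⟨S.feasN_of_wsTendsto (fun n => (hv (φ n)).1) hψφ ha, S.ψ_dom_closed _ _ hψφ ha⟩,
      φ, hφ, S.objN_le_liminf_of_wsTendsto ha⟩
  obtain ⟨u, ⟨hufeas, -⟩, hmin⟩ := exists_isMinOn_of_subseq_le_liminf (A := A) ⟨u₀, hfeas, hψ⟩ hA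
  refine ⟨u, hufeas, fun v hv => ?_⟩
  by_cases hvψ : S.ψ v = ⊤
  · simp [objN, hvψ]
  · exact hmin ⟨hv, hvψ⟩

theorem ae_forall_feasN_of_feas {u : StrongDual ℝ X} (hu : S.Feas u) :
    ∀ᵐ ω ∂S.P, ∀ N, S.FeasN N ω u := by
  have hsamp : ∀ i, ∀ᵐ ω ∂S.P, S.G (S.B u) (S.samp i ω) ∈ S.K := fun i =>
    ae_of_ae_map (S.samp_meas i).aemeasurable (by rw [S.samp_law i]; exact hu)
  filter_upwards [ae_all_iff.2 hsamp] with ω hω N i _ using hω i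

end StandingSetup

theorem SAA_problems_have_solutions_almost_surely_general {X W R R₀ Ξ Ω : Type*}
    [NormedAddCommGroup X] [NormedSpace ℝ X] [SeparableSpace X]
    [NormedAddCommGroup W] [NormedSpace ℝ W]
    [NormedAddCommGroup R] [NormedSpace ℝ R]
    [NormedAddCommGroup R₀] [NormedSpace ℝ R₀]
    [MeasurableSpace R] [BorelSpace R] [MeasurableSpace R₀] [BorelSpace R₀]
    [MetricSpace Ξ]
    [MeasurableSpace Ξ] [BorelSpace Ξ] [MeasurableSpace Ω]
    (S : StandingSetup X W R R₀ Ξ Ω) :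
    ∀ᵐ ω ∂S.P, ∀ N : ℕ, 1 ≤ N → ∃ u : StrongDual ℝ X, S.SolN N ω u := by
  obtain ⟨u₀, hfeas, hfin⟩ := S.feas_pt
  filter_upwards [S.ae_forall_feasN_of_feas hfeas] with ω hω N _
  exact S.exists_solN_of_feasN (hω N) (ENNReal.add_ne_top.1 hfin).2

/-- Under the standing setup (Assumption 1), with probability one, for every
`N ≥ 1` the SAA problem (P_SAA) with samples `ξ¹, …, ξᴺ` has at least one solution. -/
theorem SAA_problems_have_solutions_almost_surely {X W R R₀ Ξ Ω : Type*}
    [NormedAddCommGroup X] [NormedSpace ℝ X] [SeparableSpace X] [CompleteSpace X]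
    [NormedAddCommGroup W] [NormedSpace ℝ W] [SeparableSpace W] [CompleteSpace W]
    [NormedAddCommGroup R] [NormedSpace ℝ R] [SeparableSpace R] [CompleteSpace R]
    [NormedAddCommGroup R₀] [NormedSpace ℝ R₀] [SeparableSpace R₀] [CompleteSpace R₀]
    [MeasurableSpace R] [BorelSpace R] [MeasurableSpace R₀] [BorelSpace R₀]
    [MetricSpace Ξ] [CompleteSpace Ξ] [SeparableSpace Ξ]
    [MeasurableSpace Ξ] [BorelSpace Ξ] [MeasurableSpace Ω]
    (S : StandingSetup X W R R₀ Ξ Ω) :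
    ∀ᵐ ω ∂S.P, ∀ N : ℕ, 1 ≤ N → ∃ u : StrongDual ℝ X, S.SolN N ω u :=
  SAA_problems_have_solutions_almost_surely_general S
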